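/- Let A be a formally real integral domain which is an ℝ-algebra. Let I₀, M₀ be imaginary units whose vector parts are orthogonal in ℝ³, and set K₀ := I₀·M₀ (also an imaginary unit). Let h = h₀ + h₁·ι(I₀) with h₀, h₁ ∈ A, h₁ ≠ 0, set h^s := h₀² + h₁² (nonzero since A is formally real), and let f ∈ Quaternion A be not I₀-sliced. Then h * f * star h is M₀-sliced if and only if there exist f₀, ρ, u, w ∈ A with (h^s)²·u = ρ·(h₀² − h₁²), (h^s)²·w = ρ·h₀·h₁, and f = f₀ + u·ι(M₀) − 2w·ι(K₀). (Theorem 5.6, case (i).) -/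

import Mathlib

open Quaternion

/-- The componentwise extension `ι : ℍ[ℝ] → ℍ[A]` of `algebraMap ℝ A`. -/
noncomputable def qmap {A : Type*} [CommRing A] [Algebra ℝ A] (q : Quaternion ℝ) :
    Quaternion A :=
  ⟨algebraMap ℝ A q.re, algebraMap ℝ A q.imI, algebraMap ℝ A q.imJ, algebraMap ℝ A q.imK⟩

/-- An imaginary unit: a real quaternion with zero real part squaring to `-1`. -/
def IsImaginaryUnit (I : Quaternion ℝ) : Prop := I.re = 0 ∧ I ^ 2 = -1

/-- `q` is `I`-sliced if `q = a + b·ι(I)` for some `a, b ∈ A`. -/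
noncomputable def IsSliced {A : Type*} [CommRing A] [Algebra ℝ A]
    (I : Quaternion ℝ) (q : Quaternion A) : Prop :=
  ∃ a b : A, q = (a : Quaternion A) + (b : Quaternion A) * qmap I

/-- The vector parts of `I` and `M` are orthogonal in `ℝ³`. -/
def OrthIm (I M : Quaternion ℝ) : Prop :=
  I.imI * M.imI + I.imJ * M.imJ + I.imK * M.imK = 0

/-- `A` is formally real: a sum of four squares vanishes only trivially. -/
def FormallyRealFour (A : Type*) [CommRing A] : Prop :=
  ∀ a b c d : A, a ^ 2 + b ^ 2 + c ^ 2 + d ^ 2 = 0 → a = 0 ∧ b = 0 ∧ c = 0 ∧ d = 0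

/-!
Write `I, M` for `ι(I₀), ι(M₀)`. Then `K = IM`, and `1, I, M, K` multiply like `1, i, j, k`, so
`x ↦ x₀ + x₁I + x₂M + x₃K` is an `A`-algebra endomorphism of `ℍ[A]`. It preserves real parts, hence
is injective; it is surjective because, `2` being invertible, `q = ½(q - IqI) + ½(q + IqI)` splits
`q` into a part commuting with `I` and a part `βM` with `β` commuting with `I`, and whatever commutes
with `I` lies in `A + AI`. In these coordinates `h = h₀ + h₁i`, and conjugation by `h` multiplies
the `1, i` coordinates by `hˢ` and the "complex number" `x₂ + x₃i` by `h² = (h₀² - h₁²) + 2h₀h₁i`.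
So `h * f * star h` is `M`-sliced iff `x₁ = 0` and `h²(x₂ + x₃i)` is real, which, as `A` is a domain
and `hˢ ≠ 0`, says that `(hˢ)²(x₂ + x₃i)` is a multiple `ρh̄²` of `h̄²`.
-/

namespace Quaternion

variable {R : Type*} [CommRing R]

theorem sub_mul_mul_eq_two_smul {I : ℍ[R]} (hI : I.re = 0) (hII : I * I = -1) (x : ℍ[R]) :
    x - I * x * I = (2 : R) • ((x.re : ℍ[R]) - ((x * I).re : ℍ[R]) * I) := by
  have hn : I.imI * I.imI + I.imJ * I.imJ + I.imK * I.imK = 1 := by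
    have h := congrArg QuaternionAlgebra.re hII
    simp only [re_mul, hI, re_neg, re_one] at h
    linear_combination -h
  ext <;>
    simp only [re_mul, imI_mul, imJ_mul, imK_mul, hI, re_sub, imI_sub, imJ_sub, imK_sub, re_smul,
      imI_smul, imJ_smul, imK_smul, re_coe, imI_coe, imJ_coe, imK_coe, smul_eq_mul]
  · linear_combination x.re * hn
  · linear_combination -x.imI * hn
  · linear_combination -x.imJ * hn
  · linear_combination -x.imK * hn

theorem eq_coe_re_sub_of_commute [Invertible (2 : R)] {I x : ℍ[R]} (hI : I.re = 0)
    (hII : I * I = -1) (hx : Commute x I) : x = (x.re : ℍ[R]) - ((x * I).re : ℍ[R]) * I := by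
  have h := sub_mul_mul_eq_two_smul hI hII x
  rw [← hx.eq, mul_assoc, hII, mul_neg_one, sub_neg_eq_add, ← two_smul R x] at h
  exact (isUnit_of_invertible (2 : R)).smul_left_cancel.mp h

end Quaternion

/-- The relations of `i`, `j` in `ℍ[R]`; over `ℝ` they characterise imaginary units with orthogonal
vector parts. -/
structure IsOrthonormalPair {R : Type*} [CommRing R] (I M : ℍ[R]) : Prop where
  re_left : I.re = 0
  re_right : M.re = 0
  re_mul : (I * M).re = 0
  left_mul_self : I * I = -1
  right_mul_self : M * M = -1
  right_mul_left : M * I = -(I * M)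

namespace IsOrthonormalPair

variable {R : Type*} [CommRing R] {I M : ℍ[R]} (hF : IsOrthonormalPair I M)
include hF

def basis : QuaternionAlgebra.Basis ℍ[R] (-1 : R) 0 (-1) where
  i := I
  j := M
  k := I * M
  i_mul_i := by simp [hF.left_mul_self]
  j_mul_j := by simp [hF.right_mul_self]
  i_mul_j := rfl
  j_mul_i := by simp [hF.right_mul_left]

def lift : ℍ[R,-1,0,-1] →ₐ[R] ℍ[R] := QuaternionAlgebra.Basis.liftHom hF.basis

theorem lift_apply (x : ℍ[R,-1,0,-1]) :
    hF.lift x = x.re + x.imI * I + x.imJ * M + x.imK * (I * M) := by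
  simp [lift, QuaternionAlgebra.Basis.lift, basis, coe_mul_eq_smul, algebraMap_def]

theorem re_lift (x : ℍ[R,-1,0,-1]) : (hF.lift x).re = x.re := by
  simp [lift_apply, hF.re_left, hF.re_right, hF.re_mul]

theorem lift_injective : Function.Injective hF.lift := by
  intro x y hxy
  have key (z : ℍ[R,-1,0,-1]) : (x * z).re = (y * z).re := by
    rw [← hF.re_lift (x * z), ← hF.re_lift (y * z), map_mul, map_mul, hxy]
  ext
  · simpa using key 1
  · simpa using key ⟨0, -1, 0, 0⟩
  · simpa using key ⟨0, 0, -1, 0⟩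
  · simpa using key ⟨0, 0, 0, -1⟩

theorem lift_surjective [Invertible (2 : R)] : Function.Surjective hF.lift := by
  intro q
  have hII (x : ℍ[R]) : I * (I * x) = -x := by rw [← mul_assoc, hF.left_mul_self, neg_one_mul]
  set α := (⅟2 : R) • (q - I * q * I)
  set β := -(⅟2 : R) • ((q + I * q * I) * M)
  have hα : Commute α I := by
    refine Commute.smul_left ?_ _
    simp only [Commute, SemiconjBy, sub_mul, mul_sub, mul_assoc, hF.left_mul_self, hII]
    noncomm_ring
  have hβ : Commute β I := by
    refine Commute.smul_left ?_ _
    simp only [Commute, SemiconjBy, add_mul, mul_add, mul_assoc, hF.right_mul_left, mul_neg, hII]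
    abel
  have hq : q = α + β * M := by
    rw [smul_mul_assoc, mul_assoc, hF.right_mul_self, mul_neg_one, smul_neg, neg_smul, neg_neg,
      ← smul_add, sub_add_add_cancel, ← two_smul R q, smul_smul, invOf_mul_self, one_smul]
  refine ⟨⟨α.re, -(α * I).re, β.re, -(β * I).re⟩, ?_⟩
  rw [lift_apply]
  conv_rhs => rw [hq, eq_coe_re_sub_of_commute hF.re_left hF.left_mul_self hα,
    eq_coe_re_sub_of_commute hF.re_left hF.left_mul_self hβ]
  simp only [coe_neg, neg_mul, sub_eq_add_neg, add_mul, mul_assoc]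
  abel

theorem star_lift (x : ℍ[R,-1,0,-1]) : star (hF.lift x) = hF.lift (star x) := by
  have star_of_re_eq_zero {u : ℍ[R]} (hu : u.re = 0) : star u = -u := by
    rw [star_eq_two_re_sub, hu]; simp
  simp [lift_apply, star_of_re_eq_zero hF.re_left, star_of_re_eq_zero hF.re_right,
    star_of_re_eq_zero hF.re_mul, coe_commutes]

theorem exists_lift_eq_iff (y : ℍ[R,-1,0,-1]) :
    (∃ a b : R, hF.lift y = a + b * M) ↔ y.imI = 0 ∧ y.imK = 0 := by
  constructor
  · rintro ⟨a, b, hab⟩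
    have : y = ⟨a, 0, b, 0⟩ := hF.lift_injective (by rw [hab, lift_apply]; simp)
    simp [this]
  · rintro ⟨hy₁, hy₃⟩
    exact ⟨y.re, y.imJ, by simp [lift_apply, hy₁, hy₃]⟩

end IsOrthonormalPair

theorem QuaternionAlgebra.mk_mul_mul_star_mk {R : Type*} [CommRing R] (h₀ h₁ : R)
    (x : ℍ[R,-1,0,-1]) :
    (⟨h₀, h₁, 0, 0⟩ * x * star ⟨h₀, h₁, 0, 0⟩ : ℍ[R,-1,0,-1]) =
      ⟨(h₀ ^ 2 + h₁ ^ 2) * x.re, (h₀ ^ 2 + h₁ ^ 2) * x.imI,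
        (h₀ ^ 2 - h₁ ^ 2) * x.imJ - 2 * h₀ * h₁ * x.imK,
        2 * h₀ * h₁ * x.imJ + (h₀ ^ 2 - h₁ ^ 2) * x.imK⟩ := by
  ext <;> simp <;> ring

/-- With `z = h₀ + h₁i` and `β = u - 2wi`: `z²β` is real iff `|z|⁴β` is a multiple of `z̄²`. -/
theorem mul_eq_mul_iff_exists_of_sq_add_sq_ne_zero {A : Type*} [CommRing A] [NoZeroDivisors A]
    {h₀ h₁ : A} (hs : h₀ ^ 2 + h₁ ^ 2 ≠ 0) (u w : A) :
    h₀ * h₁ * u = (h₀ ^ 2 - h₁ ^ 2) * w ↔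
      ∃ ρ, (h₀ ^ 2 + h₁ ^ 2) ^ 2 * u = ρ * (h₀ ^ 2 - h₁ ^ 2) ∧
        (h₀ ^ 2 + h₁ ^ 2) ^ 2 * w = ρ * h₀ * h₁ := by
  constructor
  · intro h
    refine ⟨(h₀ ^ 2 - h₁ ^ 2) * u + 4 * h₀ * h₁ * w, ?_, ?_⟩
    · linear_combination 4 * h₀ * h₁ * h
    · linear_combination -(h₀ ^ 2 - h₁ ^ 2) * h
  · rintro ⟨ρ, hu, hw⟩
    have h : (h₀ ^ 2 + h₁ ^ 2) ^ 2 * (h₀ * h₁ * u - (h₀ ^ 2 - h₁ ^ 2) * w) = 0 := by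
      linear_combination h₀ * h₁ * hu - (h₀ ^ 2 - h₁ ^ 2) * hw
    exact sub_eq_zero.mp ((mul_eq_zero.mp h).resolve_left (pow_ne_zero 2 hs))

section Qmap

variable {A : Type*} [CommRing A] [Algebra ℝ A]

theorem re_qmap (q : ℍ[ℝ]) : (qmap q : ℍ[A]).re = algebraMap ℝ A q.re := rfl

theorem qmap_mul (x y : ℍ[ℝ]) : (qmap (x * y) : ℍ[A]) = qmap x * qmap y := by
  ext <;> simp only [re_mul, imI_mul, imJ_mul, imK_mul] <;> simp [qmap]

theorem qmap_neg (x : ℍ[ℝ]) : (qmap (-x) : ℍ[A]) = -qmap x := by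
  ext <;> simp only [re_neg, imI_neg, imJ_neg, imK_neg] <;> simp [qmap]

theorem qmap_one : (qmap 1 : ℍ[A]) = 1 := by
  ext <;> simp [qmap]

theorem isOrthonormalPair_of_orthIm {I M : ℍ[ℝ]} (hI : IsImaginaryUnit I)
    (hM : IsImaginaryUnit M) (h : OrthIm I M) : IsOrthonormalPair I M where
  re_left := hI.1
  re_right := hM.1
  re_mul := by rw [re_mul, hI.1, hM.1]; unfold OrthIm at h; linarith
  left_mul_self := by rw [← sq, hI.2]
  right_mul_self := by rw [← sq, hM.2]
  right_mul_left := by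
    unfold OrthIm at h
    ext <;> simp only [re_mul, imI_mul, imJ_mul, imK_mul, re_neg, imI_neg, imJ_neg, imK_neg, hI.1,
      hM.1, zero_mul, mul_zero, zero_sub, add_zero]
    · linear_combination -2 * h
    all_goals ring

theorem IsOrthonormalPair.qmap {I M : ℍ[ℝ]} (hF : IsOrthonormalPair I M) :
    IsOrthonormalPair (qmap I : ℍ[A]) (qmap M) where
  re_left := by rw [re_qmap, hF.re_left, map_zero]
  re_right := by rw [re_qmap, hF.re_right, map_zero]
  re_mul := by rw [← qmap_mul, re_qmap, hF.re_mul, map_zero]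
  left_mul_self := by rw [← qmap_mul, hF.left_mul_self, qmap_neg, qmap_one]
  right_mul_self := by rw [← qmap_mul, hF.right_mul_self, qmap_neg, qmap_one]
  right_mul_left := by rw [← qmap_mul, hF.right_mul_left, qmap_neg, qmap_mul]

end Qmap

theorem conjugated_sliced_iff_orthogonal_case_general
    {A : Type*} [CommRing A] [IsDomain A] [Algebra ℝ A] (hFR : FormallyRealFour A)
    (I₀ M₀ K₀ : Quaternion ℝ) (hI₀ : IsImaginaryUnit I₀) (hM₀ : IsImaginaryUnit M₀)
    (horth : OrthIm I₀ M₀) (hK₀ : K₀ = I₀ * M₀)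
    (h₀ h₁ : A) (hh₁ : h₁ ≠ 0) (h : Quaternion A)
    (hh : h = (h₀ : Quaternion A) + (h₁ : Quaternion A) * qmap I₀)
    (hs : A) (hhs : hs = h₀ ^ 2 + h₁ ^ 2)
    (f : Quaternion A) :
    IsSliced M₀ (h * f * star h) ↔
      ∃ f₀ ρ u w : A,
        hs ^ 2 * u = ρ * (h₀ ^ 2 - h₁ ^ 2) ∧
        hs ^ 2 * w = ρ * h₀ * h₁ ∧
        f = (f₀ : Quaternion A) + (u : Quaternion A) * qmap M₀
            - ((2 * w : A) : Quaternion A) * qmap K₀ := by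
  subst hhs
  have hF : IsOrthonormalPair (qmap I₀ : ℍ[A]) (qmap M₀) :=
    (isOrthonormalPair_of_orthIm hI₀ hM₀ horth).qmap
  have hs0 : h₀ ^ 2 + h₁ ^ 2 ≠ 0 := fun e => hh₁ (hFR h₀ h₁ 0 0 (by linear_combination e)).2.1
  let _ : Invertible (2 : A) := (Invertible.map (algebraMap ℝ A) 2).copy 2 (map_ofNat _ 2).symm
  have hh' : h = hF.lift ⟨h₀, h₁, 0, 0⟩ := by rw [hh, hF.lift_apply]; simp
  have hform (f₀ u w : A) : (f₀ : ℍ[A]) + (u : ℍ[A]) * qmap M₀ - ((2 * w : A) : ℍ[A]) * qmap K₀ =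
      hF.lift ⟨f₀, 0, u, -(2 * w)⟩ := by
    rw [hF.lift_apply, hK₀, qmap_mul]; simp [sub_eq_add_neg]
  obtain ⟨x, rfl⟩ := hF.lift_surjective f
  simp only [IsSliced, hh', hF.star_lift, ← map_mul, QuaternionAlgebra.mk_mul_mul_star_mk,
    hF.exists_lift_eq_iff, hform, hF.lift_injective.eq_iff]
  constructor
  · rintro ⟨hx₁, hx₃⟩
    have hx₁' : x.imI = 0 := (mul_eq_zero.mp hx₁).resolve_left hs0
    obtain ⟨ρ, hu, hw⟩ := (mul_eq_mul_iff_exists_of_sq_add_sq_ne_zero hs0 x.imJ (-(⅟2 * x.imK))).mp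
      (by linear_combination ⅟2 * hx₃ - h₀ * h₁ * x.imJ * mul_invOf_self (2 : A))
    exact ⟨x.re, ρ, x.imJ, -(⅟2 * x.imK), hu, hw, by ext <;> simp [hx₁']⟩
  · rintro ⟨f₀, ρ, u, w, hu, hw, rfl⟩
    have hw' := (mul_eq_mul_iff_exists_of_sq_add_sq_ne_zero hs0 u w).mpr ⟨ρ, hu, hw⟩
    exact ⟨by simp, by simp only; linear_combination 2 * hw'⟩

theorem conjugated_sliced_iff_orthogonal_case
    {A : Type*} [CommRing A] [IsDomain A] [Algebra ℝ A] (hFR : FormallyRealFour A)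
    (I₀ M₀ K₀ : Quaternion ℝ) (hI₀ : IsImaginaryUnit I₀) (hM₀ : IsImaginaryUnit M₀)
    (horth : OrthIm I₀ M₀) (hK₀ : K₀ = I₀ * M₀)
    (h₀ h₁ : A) (hh₁ : h₁ ≠ 0) (h : Quaternion A)
    (hh : h = (h₀ : Quaternion A) + (h₁ : Quaternion A) * qmap I₀)
    (hs : A) (hhs : hs = h₀ ^ 2 + h₁ ^ 2)
    (f : Quaternion A) (hf : ¬ IsSliced I₀ f) :
    IsSliced M₀ (h * f * star h) ↔
      ∃ f₀ ρ u w : A,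
        hs ^ 2 * u = ρ * (h₀ ^ 2 - h₁ ^ 2) ∧
        hs ^ 2 * w = ρ * h₀ * h₁ ∧
        f = (f₀ : Quaternion A) + (u : Quaternion A) * qmap M₀
            - ((2 * w : A) : Quaternion A) * qmap K₀ :=
  conjugated_sliced_iff_orthogonal_case_general hFR I₀ M₀ K₀ hI₀ hM₀ horth hK₀ h₀ h₁ hh₁ h hh hs hhs
    f
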